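/- Let p ∈ (1,2), set s = p+1, and let Δ ∈ (0, Δ_max). Assume b(t,·) and σ(t,·) are Lipschitz with constants [b]_Lip and [σ]_Lip ([σ]_Lip with respect to the operator norm), and let Z be an ℝ^q-valued random vector with E[Z] = 0 and E|Z|^s < ∞. Then for all x, x' ∈ ℝ^d and every k: E| E_k(x,Z) − E_k(x',Z) |^p ≤ |x−x'|^p · exp( Δ( c_s^{(1)} + s[b]_Lip + c^{(2)}_{s,Δ_max} [σ]_Lip^s E|Z|^s ) ). In particular the Euler operator E_k(·,Z) is L^p-Lipschitz with constant exp( Δ( c_s^{(1)} + s[b]_Lip + c^{(2)}_{s,Δ_max} [σ]_Lip^s E|Z|^s )/p ). -/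

import Mathlib

/-!
For `2 ≤ s ≤ 3` and vectors `u`, `v` of a real inner product space,
`‖u + v‖ ^ s ≤ ‖u‖ ^ s + s ‖u‖ ^ (s - 2) ⟪u, v⟫ + s (s - 1) / 2 (‖u‖ ^ (s - 2) ‖v‖ ^ 2 + ‖v‖ ^ s)`.
Since `‖u + v‖ ^ 2 = ‖u‖ ^ 2 + 2 ⟪u, v⟫ + ‖v‖ ^ 2`, the left side is convex in `⟪u, v⟫`, so it
suffices to check the extreme cases `⟪u, v⟫ = ± ‖u‖ ‖v‖`; these are inequalities between functions
of `‖v‖` with equal values at `0`, proved by comparing derivatives.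

Two Euler steps differ by `u + √Δ A Z` with `u = x - x' + Δ (b x - b x')` and `A = σ x - σ x'`.
The cross term has mean zero because `Z` is centred, Young's inequality and `Δ ≤ Δmax` absorb the
other terms into `Δ c₁ ‖u‖ ^ s` and `Δ c₂ ‖A‖ ^ s E‖Z‖ ^ s`, and `1 + y ≤ exp y` gives the
`L^s` bound `‖x - x'‖ ^ s exp (Δ C)`. Jensen's inequality lowers the exponent from `s = p + 1`
to `p`.
-/

open MeasureTheory Real

noncomputable section

abbrev Euc (d : ℕ) : Type := EuclideanSpace ℝ (Fin d)

def c₁ (r : ℝ) : ℝ := 2 ^ (max (r - 3) 0) * ((r - 1) * (r - 2) / 2)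

def c₂ (r h₀ : ℝ) : ℝ := 2 ^ (max (r - 3) 0) * (r - 1) * (1 + r / 2 * h₀ ^ (r / 2 - 1))

/-- The Euler operator `E_k(x,ε) = x + Δ b(t_k,x) + √Δ σ(t_k,x) ε`. -/
def euler {d q : ℕ} (Δ : ℝ) (b : ℝ → Euc d → Euc d) (σ : ℝ → Euc d → (Euc q →L[ℝ] Euc d))
    (tk : ℝ) (x : Euc d) (e : Euc q) : Euc d :=
  x + Δ • b tk x + Real.sqrt Δ • (σ tk x) e

open Set

theorem le_of_hasDerivAt_le {f g f' g' : ℝ → ℝ} {a b : ℝ} (hab : a ≤ b)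
    (hf : ∀ x ∈ Icc a b, HasDerivAt f (f' x) x) (hg : ∀ x ∈ Icc a b, HasDerivAt g (g' x) x)
    (ha : f a ≤ g a) (hfg : ∀ x ∈ Ico a b, f' x ≤ g' x) : f b ≤ g b :=
  image_le_of_deriv_right_le_deriv_boundary
    (fun x hx => (hf x hx).continuousAt.continuousWithinAt)
    (fun x hx => (hf x (Ico_subset_Icc_self hx)).hasDerivWithinAt) ha
    (fun x hx => (hg x hx).continuousAt.continuousWithinAt)
    (fun x hx => (hg x (Ico_subset_Icc_self hx)).hasDerivWithinAt) hfg (right_mem_Icc.2 hab)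

namespace Real

theorem add_rpow_le_rpow_add_mul_add_rpow {r a b : ℝ} (hr1 : 1 ≤ r) (hr2 : r ≤ 2)
    (ha : 0 ≤ a) (hb : 0 ≤ b) :
    (a + b) ^ r ≤ a ^ r + r * a ^ (r - 1) * b + b ^ r := by
  refine le_of_hasDerivAt_le (f' := fun x => r * (a + x) ^ (r - 1))
    (g' := fun x => r * a ^ (r - 1) + r * x ^ (r - 1)) hb
    (fun x _ => by simpa using ((hasDerivAt_id x).const_add a).rpow_const (Or.inr hr1))
    (fun x _ => by
      simpa using ((hasDerivAt_id x).const_mul (r * a ^ (r - 1))).const_add (a ^ r)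
        |>.add (hasDerivAt_rpow_const (Or.inr hr1)))
    (by simp [zero_rpow (by linarith : r ≠ 0)]) fun x hx => ?_
  have := rpow_add_le_add_rpow ha hx.1 (by linarith : 0 ≤ r - 1) (by linarith)
  nlinarith

theorem rpow_sub_mul_le_sub_rpow {r a b : ℝ} (hr : 1 ≤ r) (hb : 0 ≤ b) (hba : b ≤ a) :
    a ^ r - r * a ^ (r - 1) * b ≤ (a - b) ^ r := by
  refine le_of_hasDerivAt_le (f' := fun _ => -(r * a ^ (r - 1)))
    (g' := fun x => -(r * (a - x) ^ (r - 1))) hb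
    (fun x _ => by simpa using ((hasDerivAt_id x).const_mul (r * a ^ (r - 1))).const_sub (a ^ r))
    (fun x _ => by simpa using ((hasDerivAt_id x).const_sub a).rpow_const (Or.inr hr))
    (by simp) fun x hx => ?_
  have := rpow_le_rpow (by linarith [hx.2]) (by linarith [hx.1] : a - x ≤ a)
    (by linarith : 0 ≤ r - 1)
  nlinarith

theorem add_rpow_le_second_order {s a b : ℝ} (hs2 : 2 ≤ s) (hs3 : s ≤ 3) (ha : 0 ≤ a) (hb : 0 ≤ b) :
    (a + b) ^ s
      ≤ a ^ s + s * a ^ (s - 1) * b + s * (s - 1) / 2 * (a ^ (s - 2) * b ^ 2 + b ^ s) := by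
  refine le_of_hasDerivAt_le (f' := fun x => s * (a + x) ^ (s - 1))
    (g' := fun x => s * a ^ (s - 1) + s * (s - 1) / 2 * (a ^ (s - 2) * (2 * x) + s * x ^ (s - 1)))
    hb (fun x _ => by simpa using ((hasDerivAt_id x).const_add a).rpow_const (Or.inr (by linarith)))
    (fun x _ => by
      have h := ((hasDerivAt_pow 2 x).const_mul (a ^ (s - 2))).add
        (hasDerivAt_rpow_const (x := x) (Or.inr (by linarith : 1 ≤ s)))
      simpa using (((hasDerivAt_id x).const_mul (s * a ^ (s - 1))).const_add (a ^ s)).add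
        (h.const_mul (s * (s - 1) / 2)))
    (by simp [zero_rpow (by linarith : s ≠ 0)]) fun x hx => ?_
  have h := add_rpow_le_rpow_add_mul_add_rpow (by linarith : 1 ≤ s - 1) (by linarith) ha hx.1
  rw [show s - 1 - 1 = s - 2 by ring] at h
  have := mul_nonneg (mul_nonneg (by nlinarith : 0 ≤ s * (s - 1) / 2 - 1) (by linarith : 0 ≤ s))
    (rpow_nonneg hx.1 (s - 1))
  nlinarith

theorem abs_sub_rpow_le_second_order {s a b : ℝ} (hs2 : 2 ≤ s) (ha : 0 ≤ a) (hb : 0 ≤ b) :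
    |a - b| ^ s
      ≤ a ^ s - s * a ^ (s - 1) * b + s * (s - 1) / 2 * (a ^ (s - 2) * b ^ 2 + b ^ s) := by
  have hbs := rpow_nonneg hb s
  rcases le_total b a with hba | hab
  · have hle : (a - b) ^ s
        ≤ a ^ s - s * a ^ (s - 1) * b + s * (s - 1) / 2 * (a ^ (s - 2) * b ^ 2) := by
      refine le_of_hasDerivAt_le (f' := fun x => -(s * (a - x) ^ (s - 1)))
        (g' := fun x => -(s * a ^ (s - 1)) + s * (s - 1) / 2 * (a ^ (s - 2) * (2 * x)))
        hb (fun x _ => by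
          simpa using ((hasDerivAt_id x).const_sub a).rpow_const (Or.inr (by linarith)))
        (fun x _ => by
          simpa using (((hasDerivAt_id x).const_mul (s * a ^ (s - 1))).const_sub (a ^ s)).add
            (((hasDerivAt_pow 2 x).const_mul (a ^ (s - 2))).const_mul (s * (s - 1) / 2)))
        (by simp) fun x hx => ?_
      have h := rpow_sub_mul_le_sub_rpow (by linarith : 1 ≤ s - 1) hx.1 (hx.2.le.trans hba)
      rw [show s - 1 - 1 = s - 2 by ring] at h
      nlinarith
    rw [abs_of_nonneg (by linarith)]
    nlinarith [mul_nonneg (by nlinarith : 0 ≤ s * (s - 1) / 2) hbs]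
  · have hsq : a ^ s = a ^ (s - 2) * a ^ 2 := by
      rw [← rpow_natCast, ← rpow_add' ha (by norm_num; linarith)]; norm_num
    have hlin : a ^ (s - 1) = a ^ (s - 2) * a := by
      rw [← rpow_add_one' ha (by linarith)]; ring_nf
    have hquad : 0 ≤ a ^ 2 - s * a * b + s * (s - 1) / 2 * b ^ 2 := by
      nlinarith [sq_nonneg (2 * a - s * b), mul_nonneg (by linarith : 0 ≤ s - 2) (sq_nonneg b)]
    have hsub : |a - b| ^ s ≤ b ^ s := by
      rw [abs_of_nonpos (by linarith)]
      exact rpow_le_rpow (by linarith) (by linarith) (by linarith)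
    rw [hsq, hlin]
    nlinarith [mul_nonneg (rpow_nonneg ha (s - 2)) hquad,
      mul_nonneg (by nlinarith : 0 ≤ s * (s - 1) / 2 - 1) hbs]

theorem sq_rpow_div_two (x s : ℝ) : (x ^ 2) ^ (s / 2) = |x| ^ s := by
  rw [← sq_abs, ← rpow_natCast, ← rpow_mul (abs_nonneg x)]
  ring_nf

theorem rpow_sq_add_two_mul_add_sq_le {s a b c : ℝ} (hs2 : 2 ≤ s) (hs3 : s ≤ 3) (ha : 0 ≤ a)
    (hb : 0 ≤ b) (hc : |c| ≤ a * b) :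
    (a ^ 2 + 2 * c + b ^ 2) ^ (s / 2)
      ≤ a ^ s + s * a ^ (s - 2) * c + s * (s - 1) / 2 * (a ^ (s - 2) * b ^ 2 + b ^ s) := by
  -- convex minus affine in `c`, hence maximal at `c = ± a b`, where `a ^ 2 + 2 c + b ^ 2`
  -- is `(a ± b) ^ 2`
  let h : ℝ → ℝ := fun c => (a ^ 2 + 2 * c + b ^ 2) ^ (s / 2) - s * a ^ (s - 2) * c
  have hconv : ConvexOn ℝ (Icc (-(a * b)) (a * b)) h := by
    refine ⟨convex_Icc _ _, fun x hx y hy μ ν hμ hν hμν => ?_⟩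
    have hF := (convexOn_rpow (by linarith : 1 ≤ s / 2)).2
      (by nlinarith [hx.1, sq_nonneg (a - b)] : 0 ≤ a ^ 2 + 2 * x + b ^ 2)
      (by nlinarith [hy.1, sq_nonneg (a - b)] : 0 ≤ a ^ 2 + 2 * y + b ^ 2) hμ hν hμν
    simp only [smul_eq_mul] at hF ⊢
    rw [show μ * (a ^ 2 + 2 * x + b ^ 2) + ν * (a ^ 2 + 2 * y + b ^ 2)
      = a ^ 2 + 2 * (μ * x + ν * y) + b ^ 2 by linear_combination (a ^ 2 + b ^ 2) * hμν] at hF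
    linarith
  have hab : -(a * b) ≤ a * b := by nlinarith [mul_nonneg ha hb]
  have hlin : a ^ (s - 2) * a = a ^ (s - 1) := by
    rw [← rpow_add_one' ha (by linarith)]; ring_nf
  have hmax := hconv.le_on_segment (left_mem_Icc.2 hab) (right_mem_Icc.2 hab)
    (by rw [segment_eq_Icc hab]; exact abs_le.1 hc)
  have hminus : h (-(a * b)) ≤ a ^ s + s * (s - 1) / 2 * (a ^ (s - 2) * b ^ 2 + b ^ s) := by
    have := abs_sub_rpow_le_second_order hs2 ha hb
    rw [← hlin] at this
    simp only [h]
    rw [show a ^ 2 + 2 * -(a * b) + b ^ 2 = (a - b) ^ 2 by ring, sq_rpow_div_two]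
    linarith
  have hplus : h (a * b) ≤ a ^ s + s * (s - 1) / 2 * (a ^ (s - 2) * b ^ 2 + b ^ s) := by
    have := add_rpow_le_second_order hs2 hs3 ha hb
    rw [← hlin] at this
    simp only [h]
    rw [show a ^ 2 + 2 * (a * b) + b ^ 2 = (a + b) ^ 2 by ring, sq_rpow_div_two,
      abs_of_nonneg (by linarith)]
    linarith
  have := hmax.trans (max_le hminus hplus)
  simp only [h] at this
  linarith

theorem rpow_sub_two_mul_sq_le {s x y : ℝ} (hs : 2 ≤ s) (hx : 0 ≤ x) (hy : 0 ≤ y) :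
    x ^ (s - 2) * y ^ 2 ≤ (s - 2) / s * x ^ s + 2 / s * y ^ s := by
  have hs0 : 0 < s := by linarith
  have h := geom_mean_le_arith_mean2_weighted (w₁ := (s - 2) / s) (w₂ := 2 / s)
    (p₁ := x ^ s) (p₂ := y ^ s) (div_nonneg (by linarith) hs0.le)
    (by positivity) (rpow_nonneg hx s) (rpow_nonneg hy s) (by field_simp; ring)
  rwa [← rpow_mul hx, ← rpow_mul hy, mul_div_cancel₀ _ hs0.ne',
    mul_div_cancel₀ _ hs0.ne', rpow_two] at h

end Real

theorem c₁_of_le_three {s : ℝ} (hs : s ≤ 3) : c₁ s = (s - 1) * (s - 2) / 2 := by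
  simp [c₁, max_eq_right (by linarith : s - 3 ≤ 0)]

theorem c₂_of_le_three {s : ℝ} (hs : s ≤ 3) (h₀ : ℝ) :
    c₂ s h₀ = (s - 1) * (1 + s / 2 * h₀ ^ (s / 2 - 1)) := by
  simp [c₂, max_eq_right (by linarith : s - 3 ≤ 0)]

theorem c₁_nonneg {s : ℝ} (hs : 2 ≤ s) : 0 ≤ c₁ s := by
  unfold c₁
  have : 0 ≤ (s - 1) * (s - 2) := by nlinarith
  positivity

theorem c₂_nonneg {s h₀ : ℝ} (hs : 1 ≤ s) (hh₀ : 0 ≤ h₀) : 0 ≤ c₂ s h₀ := by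
  unfold c₂
  have : 0 ≤ s - 1 := by linarith
  have : 0 ≤ h₀ ^ (s / 2 - 1) := rpow_nonneg hh₀ _
  positivity

section InnerProductSpace

variable {E : Type*} [NormedAddCommGroup E] [InnerProductSpace ℝ E]

theorem norm_add_rpow_le_second_order {s : ℝ} (hs2 : 2 ≤ s) (hs3 : s ≤ 3) (u v : E) :
    ‖u + v‖ ^ s ≤ ‖u‖ ^ s + s * ‖u‖ ^ (s - 2) * inner ℝ u v
      + s * (s - 1) / 2 * (‖u‖ ^ (s - 2) * ‖v‖ ^ 2 + ‖v‖ ^ s) := by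
  have := rpow_sq_add_two_mul_add_sq_le hs2 hs3 (norm_nonneg u) (norm_nonneg v)
    (abs_real_inner_le_norm u v)
  rwa [← norm_add_sq_real, sq_rpow_div_two, abs_norm] at this

theorem norm_add_rpow_le_of_norm_le_sqrt_mul {s Δ Δmax ℓ : ℝ} (hs2 : 2 ≤ s) (hs3 : s ≤ 3)
    (hΔ : 0 ≤ Δ) (hΔmax : Δ ≤ Δmax) (hℓ : 0 ≤ ℓ) (u v : E) (hv : ‖v‖ ≤ √Δ * ℓ) :
    ‖u + v‖ ^ s ≤ (1 + Δ * c₁ s) * ‖u‖ ^ s + s * ‖u‖ ^ (s - 2) * inner ℝ u v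
      + Δ * c₂ s Δmax * ℓ ^ s := by
  -- Young's inequality splits `‖u‖ ^ (s - 2) ‖v‖ ^ 2` into the `c₁` term and the first part
  -- of `c₂`; `Δ ^ (s / 2) ≤ Δ Δmax ^ (s / 2 - 1)` turns `‖v‖ ^ s` into the second part.
  have hK : 0 ≤ s * (s - 1) / 2 := by nlinarith
  have hv2 : ‖v‖ ^ 2 ≤ Δ * ℓ ^ 2 := by
    calc ‖v‖ ^ 2 ≤ (√Δ * ℓ) ^ 2 := pow_le_pow_left₀ (norm_nonneg v) hv 2
      _ = Δ * ℓ ^ 2 := by rw [mul_pow, sq_sqrt hΔ]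
  have hvs : ‖v‖ ^ s ≤ Δ * Δmax ^ (s / 2 - 1) * ℓ ^ s := by
    have hΔs : Δ ^ (s / 2) ≤ Δ * Δmax ^ (s / 2 - 1) := by
      calc Δ ^ (s / 2) = Δ ^ (s / 2 - 1) * Δ := by
            rw [← rpow_add_one' hΔ (by linarith)]; ring_nf
        _ ≤ Δ * Δmax ^ (s / 2 - 1) := by
          rw [mul_comm]; gcongr; linarith
    calc ‖v‖ ^ s ≤ (√Δ * ℓ) ^ s := rpow_le_rpow (norm_nonneg v) hv (by linarith)
      _ = Δ ^ (s / 2) * ℓ ^ s := by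
        rw [mul_rpow (sqrt_nonneg Δ) hℓ, sqrt_eq_rpow, ← rpow_mul hΔ]
        ring_nf
      _ ≤ Δ * Δmax ^ (s / 2 - 1) * ℓ ^ s := by gcongr
  have hmixed : s * (s - 1) / 2 * (‖u‖ ^ (s - 2) * ‖v‖ ^ 2)
      ≤ Δ * c₁ s * ‖u‖ ^ s + Δ * (s - 1) * ℓ ^ s := by
    have hyoung := rpow_sub_two_mul_sq_le hs2 (norm_nonneg u) hℓ
    calc s * (s - 1) / 2 * (‖u‖ ^ (s - 2) * ‖v‖ ^ 2)
        ≤ s * (s - 1) / 2 * (‖u‖ ^ (s - 2) * (Δ * ℓ ^ 2)) := by gcongr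
      _ ≤ s * (s - 1) / 2 * (Δ * ((s - 2) / s * ‖u‖ ^ s + 2 / s * ℓ ^ s)) := by
        rw [mul_left_comm (‖u‖ ^ (s - 2))]; gcongr
      _ = Δ * c₁ s * ‖u‖ ^ s + Δ * (s - 1) * ℓ ^ s := by
        rw [c₁_of_le_three hs3]; field_simp
  have := norm_add_rpow_le_second_order hs2 hs3 u v
  rw [c₂_of_le_three hs3]
  nlinarith [mul_le_mul_of_nonneg_left hvs hK]

end InnerProductSpace

theorem one_add_mul_one_add_rpow_add_le_exp {a b c s : ℝ} (ha : 0 ≤ a) (hb : 0 ≤ b) (hc : 0 ≤ c)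
    (hs : 0 ≤ s) : (1 + a) * (1 + b) ^ s + c ≤ exp (a + s * b + c) := by
  have hab : (1 + a) * (1 + b) ^ s ≤ exp (a + s * b) := by
    rw [exp_add, mul_comm s, exp_mul]
    gcongr
    · linarith [add_one_le_exp a]
    · linarith [add_one_le_exp b]
  have hexp : 1 ≤ exp (a + s * b) := one_le_exp (by positivity)
  calc (1 + a) * (1 + b) ^ s + c ≤ exp (a + s * b) * (1 + c) := by nlinarith
    _ ≤ exp (a + s * b) * exp c := by gcongr; linarith [add_one_le_exp c]
    _ = exp (a + s * b + c) := (exp_add _ _).symm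

section Probability

variable {Ω : Type*} [MeasurableSpace Ω] {P : Measure Ω} [IsProbabilityMeasure P]

theorem integral_rpow_le_integral_rpow_rpow {X : Ω → ℝ} (hX : ∀ ω, 0 ≤ X ω)
    (hXm : AEStronglyMeasurable X P) {p s : ℝ} (hp : 0 < p) (hps : p ≤ s)
    (hXs : Integrable (fun ω => X ω ^ s) P) :
    ∫ ω, X ω ^ p ∂P ≤ (∫ ω, X ω ^ s ∂P) ^ (p / s) := by
  have hs : 0 < s := hp.trans_le hps
  have hpow : ∀ ω, (X ω ^ s) ^ (p / s) = X ω ^ p := fun ω => by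
    rw [← rpow_mul (hX ω), mul_div_cancel₀ _ hs.ne']
  have hXp : Integrable (fun ω => X ω ^ p) P := by
    refine ((integrable_const 1).add hXs).mono'
      ((continuous_rpow_const hp.le).comp_aestronglyMeasurable hXm) (ae_of_all _ fun ω => ?_)
    rw [norm_of_nonneg (rpow_nonneg (hX ω) p), Pi.add_apply]
    rcases le_total (X ω) 1 with h | h
    · linarith [rpow_le_one (hX ω) h hp.le, rpow_nonneg (hX ω) s]
    · linarith [rpow_le_rpow_of_exponent_le h hps]
  have := (concaveOn_rpow (div_nonneg hp.le hs.le) ((div_le_one hs).2 hps)).le_map_integral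
    (continuous_rpow_const (div_nonneg hp.le hs.le)).continuousOn isClosed_Ici
    (ae_of_all _ fun ω => rpow_nonneg (hX ω) s) hXs (by simpa [Function.comp_def, hpow] using hXp)
  simpa only [hpow] using this

variable {E F : Type*} [NormedAddCommGroup E] [NormedAddCommGroup F] [NormedSpace ℝ F]

theorem integrable_norm_add_smul_rpow [NormedSpace ℝ E] {s : ℝ} (hs : 0 < s) (u : E)
    (A : F →L[ℝ] E) (c : ℝ) {Z : Ω → F} (hZ : AEStronglyMeasurable Z P)
    (hZs : Integrable (fun ω => ‖Z ω‖ ^ s) P) :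
    Integrable (fun ω => ‖u + c • A (Z ω)‖ ^ s) P := by
  have hne : ENNReal.ofReal s ≠ 0 := by simpa using hs
  have hZ : MemLp Z (ENNReal.ofReal s) P := by
    rw [← integrable_norm_rpow_iff hZ hne ENNReal.ofReal_ne_top, ENNReal.toReal_ofReal hs.le]
    exact hZs
  have := ((memLp_const u).add ((A.comp_memLp' hZ).const_smul c)).integrable_norm_rpow hne
    ENNReal.ofReal_ne_top
  simpa [ENNReal.toReal_ofReal hs.le] using this

theorem integral_norm_add_smul_rpow_le [InnerProductSpace ℝ E] [CompleteSpace F]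
    {s Δ Δmax : ℝ} (hs2 : 2 ≤ s) (hs3 : s ≤ 3) (hΔ : 0 ≤ Δ) (hΔmax : Δ ≤ Δmax) (u : E)
    (A : F →L[ℝ] E) {Z : Ω → F} (hZ1 : Integrable Z P) (hZ0 : ∫ ω, Z ω ∂P = 0)
    (hZs : Integrable (fun ω => ‖Z ω‖ ^ s) P) :
    ∫ ω, ‖u + √Δ • A (Z ω)‖ ^ s ∂P
      ≤ (1 + Δ * c₁ s) * ‖u‖ ^ s + Δ * c₂ s Δmax * ‖A‖ ^ s * ∫ ω, ‖Z ω‖ ^ s ∂P := by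
  let Φ : F →L[ℝ] ℝ := (s * ‖u‖ ^ (s - 2) * √Δ) • (innerSL ℝ u).comp A
  have hpt : ∀ ω, ‖u + √Δ • A (Z ω)‖ ^ s
      ≤ (1 + Δ * c₁ s) * ‖u‖ ^ s + Φ (Z ω) + Δ * c₂ s Δmax * ‖A‖ ^ s * ‖Z ω‖ ^ s := fun ω => by
    have hv : ‖√Δ • A (Z ω)‖ ≤ √Δ * (‖A‖ * ‖Z ω‖) := by
      rw [norm_smul, norm_of_nonneg (sqrt_nonneg Δ)]
      gcongr
      exact A.le_opNorm (Z ω)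
    have := norm_add_rpow_le_of_norm_le_sqrt_mul hs2 hs3 hΔ hΔmax (by positivity) u _ hv
    rw [mul_rpow (norm_nonneg _) (norm_nonneg _), inner_smul_right] at this
    simp only [Φ, smul_apply, ContinuousLinearMap.comp_apply, innerSL_apply_apply, smul_eq_mul]
    linarith
  have hI₁ : Integrable (fun ω => (1 + Δ * c₁ s) * ‖u‖ ^ s + Φ (Z ω)) P :=
    (integrable_const _).add (Φ.integrable_comp hZ1)
  have hI₂ : Integrable (fun ω => Δ * c₂ s Δmax * ‖A‖ ^ s * ‖Z ω‖ ^ s) P := hZs.const_mul _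
  calc ∫ ω, ‖u + √Δ • A (Z ω)‖ ^ s ∂P
      ≤ ∫ ω, (1 + Δ * c₁ s) * ‖u‖ ^ s + Φ (Z ω) + Δ * c₂ s Δmax * ‖A‖ ^ s * ‖Z ω‖ ^ s ∂P :=
        integral_mono (integrable_norm_add_smul_rpow (by linarith) u A _ hZ1.1 hZs)
          (hI₁.add hI₂) hpt
    _ = (1 + Δ * c₁ s) * ‖u‖ ^ s + Δ * c₂ s Δmax * ‖A‖ ^ s * ∫ ω, ‖Z ω‖ ^ s ∂P := by
        rw [integral_add hI₁ hI₂, integral_add (integrable_const _) (Φ.integrable_comp hZ1),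
          Φ.integral_comp_comm hZ1, hZ0, map_zero, integral_const, integral_const_mul]
        simp

end Probability

section Euler

variable {d q : ℕ} {b : ℝ → Euc d → Euc d} {σ : ℝ → Euc d → (Euc q →L[ℝ] Euc d)}

theorem euler_sub_euler (Δ t : ℝ) (x x' : Euc d) (e : Euc q) :
    euler Δ b σ t x e - euler Δ b σ t x' e
      = (x - x' + Δ • (b t x - b t x')) + √Δ • (σ t x - σ t x') e := by
  simp only [euler, sub_apply, smul_sub]
  abel

variable {Ω : Type*} [MeasurableSpace Ω] {P : Measure Ω} [IsProbabilityMeasure P]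
  {Z : Ω → Euc q} {s Δ Δmax Lb Lσ : ℝ}

theorem integrable_norm_euler_sub_rpow (hs : 0 < s) (hZ : AEStronglyMeasurable Z P)
    (hZs : Integrable (fun ω => ‖Z ω‖ ^ s) P) (t : ℝ) (x x' : Euc d) :
    Integrable (fun ω => ‖euler Δ b σ t x (Z ω) - euler Δ b σ t x' (Z ω)‖ ^ s) P := by
  simpa only [euler_sub_euler] using integrable_norm_add_smul_rpow hs _ _ _ hZ hZs

theorem integral_norm_euler_sub_rpow_le (hs2 : 2 ≤ s) (hs3 : s ≤ 3) (hΔ : 0 ≤ Δ)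
    (hΔmax : Δ ≤ Δmax) (hLb : 0 ≤ Lb) (hLσ : 0 ≤ Lσ)
    (hb : ∀ t x y, ‖b t x - b t y‖ ≤ Lb * ‖x - y‖)
    (hσ : ∀ t x y, ‖σ t x - σ t y‖ ≤ Lσ * ‖x - y‖)
    (hZ1 : Integrable Z P) (hZ0 : ∫ ω, Z ω ∂P = 0) (hZs : Integrable (fun ω => ‖Z ω‖ ^ s) P)
    (t : ℝ) (x x' : Euc d) :
    ∫ ω, ‖euler Δ b σ t x (Z ω) - euler Δ b σ t x' (Z ω)‖ ^ s ∂P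
      ≤ ‖x - x'‖ ^ s
        * exp (Δ * (c₁ s + s * Lb + c₂ s Δmax * Lσ ^ s * ∫ ω, ‖Z ω‖ ^ s ∂P)) := by
  set M := ∫ ω, ‖Z ω‖ ^ s ∂P
  have hM : 0 ≤ M := integral_nonneg fun ω => rpow_nonneg (norm_nonneg _) s
  have hdrift : ‖x - x' + Δ • (b t x - b t x')‖ ≤ (1 + Δ * Lb) * ‖x - x'‖ := by
    refine (norm_add_le _ _).trans ?_
    rw [norm_smul, norm_of_nonneg hΔ]
    nlinarith [hb t x x']
  have hdiff : ‖σ t x - σ t x'‖ ^ s ≤ Lσ ^ s * ‖x - x'‖ ^ s := by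
    rw [← mul_rpow hLσ (norm_nonneg _)]
    exact rpow_le_rpow (norm_nonneg _) (hσ t x x') (by linarith)
  have hc₂ : 0 ≤ Δ * c₂ s Δmax := mul_nonneg hΔ (c₂_nonneg (by linarith) (hΔ.trans hΔmax))
  simp_rw [euler_sub_euler]
  calc _ ≤ (1 + Δ * c₁ s) * ‖x - x' + Δ • (b t x - b t x')‖ ^ s
        + Δ * c₂ s Δmax * ‖σ t x - σ t x'‖ ^ s * M :=
        integral_norm_add_smul_rpow_le hs2 hs3 hΔ hΔmax _ _ hZ1 hZ0 hZs
    _ ≤ (1 + Δ * c₁ s) * ((1 + Δ * Lb) ^ s * ‖x - x'‖ ^ s)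
        + Δ * c₂ s Δmax * (Lσ ^ s * ‖x - x'‖ ^ s) * M := by
        have := mul_nonneg hΔ (c₁_nonneg hs2)
        rw [← mul_rpow (by positivity) (norm_nonneg _)]
        gcongr
    _ = ‖x - x'‖ ^ s * ((1 + Δ * c₁ s) * (1 + Δ * Lb) ^ s + Δ * c₂ s Δmax * Lσ ^ s * M) := by
        ring
    _ ≤ ‖x - x'‖ ^ s * exp (Δ * c₁ s + s * (Δ * Lb) + Δ * c₂ s Δmax * Lσ ^ s * M) := by
        gcongr
        exact one_add_mul_one_add_rpow_add_le_exp (mul_nonneg hΔ (c₁_nonneg hs2))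
          (mul_nonneg hΔ hLb) (by positivity) (by linarith)
    _ = _ := by ring_nf

theorem integral_norm_euler_sub_rpow_le_of_le {p : ℝ} (hp : 0 < p) (hps : p ≤ s) (hs2 : 2 ≤ s)
    (hs3 : s ≤ 3) (hΔ : 0 ≤ Δ) (hΔmax : Δ ≤ Δmax) (hLb : 0 ≤ Lb) (hLσ : 0 ≤ Lσ)
    (hb : ∀ t x y, ‖b t x - b t y‖ ≤ Lb * ‖x - y‖)
    (hσ : ∀ t x y, ‖σ t x - σ t y‖ ≤ Lσ * ‖x - y‖)
    (hZ1 : Integrable Z P) (hZ0 : ∫ ω, Z ω ∂P = 0) (hZs : Integrable (fun ω => ‖Z ω‖ ^ s) P)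
    (t : ℝ) (x x' : Euc d) :
    ∫ ω, ‖euler Δ b σ t x (Z ω) - euler Δ b σ t x' (Z ω)‖ ^ p ∂P
      ≤ ‖x - x'‖ ^ p
        * exp (Δ * (c₁ s + s * Lb + c₂ s Δmax * Lσ ^ s * ∫ ω, ‖Z ω‖ ^ s ∂P)) := by
  set a := Δ * (c₁ s + s * Lb + c₂ s Δmax * Lσ ^ s * ∫ ω, ‖Z ω‖ ^ s ∂P)
  have ha : 0 ≤ a := by
    have := c₁_nonneg hs2
    have := c₂_nonneg (by linarith : 1 ≤ s) (hΔ.trans hΔmax)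
    have : 0 ≤ ∫ ω, ‖Z ω‖ ^ s ∂P := by positivity
    positivity
  have hs : 0 < s := by linarith
  have hW : AEStronglyMeasurable
      (fun ω => ‖euler Δ b σ t x (Z ω) - euler Δ b σ t x' (Z ω)‖) P :=
    Continuous.comp_aestronglyMeasurable (g := fun e => ‖euler Δ b σ t x e - euler Δ b σ t x' e‖)
      (by unfold euler; fun_prop) hZ1.1
  calc _ ≤ (∫ ω, ‖euler Δ b σ t x (Z ω) - euler Δ b σ t x' (Z ω)‖ ^ s ∂P) ^ (p / s) :=
        integral_rpow_le_integral_rpow_rpow (fun ω => norm_nonneg _) hW hp hps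
          (integrable_norm_euler_sub_rpow hs hZ1.1 hZs t x x')
    _ ≤ (‖x - x'‖ ^ s * exp a) ^ (p / s) := by
        gcongr
        exact integral_norm_euler_sub_rpow_le hs2 hs3 hΔ hΔmax hLb hLσ hb hσ hZ1 hZ0 hZs t x x'
    _ = ‖x - x'‖ ^ p * exp (p / s * a) := by
        rw [mul_rpow (by positivity) (exp_pos a).le, ← rpow_mul (norm_nonneg _),
          mul_div_cancel₀ _ hs.ne', ← exp_mul, mul_comm a]
    _ ≤ ‖x - x'‖ ^ p * exp a := by
        gcongr
        exact mul_le_of_le_one_left ha ((div_le_one hs).2 hps)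

end Euler

theorem euler_Lp_lipschitz_of_lt_two_general (d q : ℕ) (T Δmax : ℝ) (n : ℕ) (hT : 0 < T)
    (hΔ : T / n < Δmax) (p : ℝ) (hp1 : 1 < p) (hp2 : p < 2)
    (b : ℝ → Euc d → Euc d) (σ : ℝ → Euc d → (Euc q →L[ℝ] Euc d)) (Lb Lσ : ℝ)
    (hLb : 0 ≤ Lb) (hLσ : 0 ≤ Lσ)
    (hb : ∀ t x y, ‖b t x - b t y‖ ≤ Lb * ‖x - y‖)
    (hσ : ∀ t x y, ‖σ t x - σ t y‖ ≤ Lσ * ‖x - y‖)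
    (Ω : Type*) [MeasurableSpace Ω] (P : Measure Ω) [IsProbabilityMeasure P]
    (Z : Ω → Euc q) (hZ1 : Integrable Z P)
    (hZ0 : (∫ ω, Z ω ∂P) = 0) (hZs : Integrable (fun ω => ‖Z ω‖ ^ (p + 1)) P)
    (x x' : Euc d) (k : ℕ) :
    (∫ ω, ‖euler (T / n) b σ ((k : ℝ) * (T / n)) x (Z ω)
          - euler (T / n) b σ ((k : ℝ) * (T / n)) x' (Z ω)‖ ^ p ∂P)
        ≤ ‖x - x'‖ ^ p
          * Real.exp ((T / n) * (c₁ (p + 1) + (p + 1) * Lb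
              + c₂ (p + 1) Δmax * Lσ ^ (p + 1) * ∫ ω, ‖Z ω‖ ^ (p + 1) ∂P))
      ∧ (∫ ω, ‖euler (T / n) b σ ((k : ℝ) * (T / n)) x (Z ω)
          - euler (T / n) b σ ((k : ℝ) * (T / n)) x' (Z ω)‖ ^ p ∂P) ^ (1 / p)
        ≤ Real.exp ((T / n) * (c₁ (p + 1) + (p + 1) * Lb
              + c₂ (p + 1) Δmax * Lσ ^ (p + 1) * ∫ ω, ‖Z ω‖ ^ (p + 1) ∂P) / p)
          * ‖x - x'‖ := by
  have hΔ₀ : 0 ≤ T / n := div_nonneg hT.le n.cast_nonneg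
  have hp := integral_norm_euler_sub_rpow_le_of_le (p := p) (s := p + 1) (by linarith)
    (by linarith) (by linarith) (by linarith) hΔ₀ hΔ.le hLb hLσ hb hσ hZ1 hZ0 hZs (k * (T / n)) x x'
  refine ⟨hp, (rpow_le_rpow (by positivity) hp (by positivity)).trans_eq ?_⟩
  rw [mul_rpow (by positivity) (exp_pos _).le, ← rpow_mul (norm_nonneg _),
    mul_one_div_cancel (by linarith), rpow_one, ← exp_mul, mul_comm, mul_one_div]

/-- `L^p`-Lipschitz property of the Euler operator for `p ∈ (1,2)`, with `s = p + 1`: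
`E|E_k(x,Z) − E_k(x',Z)|^p ≤ |x−x'|^p exp(Δ(c_s^{(1)} + s[b]_Lip + c^{(2)}_{s,Δmax}[σ]_Lip^s E|Z|^s))`,
and in particular `E_k(·,Z)` is `L^p`-Lipschitz with constant `exp(Δ(⋯)/p)`. -/
theorem euler_Lp_lipschitz_of_lt_two (d q : ℕ) (T Δmax : ℝ) (n : ℕ) (hn : 0 < n) (hT : 0 < T)
    (hΔmax : 0 < Δmax) (hΔ : T / n < Δmax) (p : ℝ) (hp1 : 1 < p) (hp2 : p < 2)
    (b : ℝ → Euc d → Euc d) (σ : ℝ → Euc d → (Euc q →L[ℝ] Euc d)) (Lb Lσ : ℝ)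
    (hLb : 0 ≤ Lb) (hLσ : 0 ≤ Lσ)
    (hb : ∀ t x y, ‖b t x - b t y‖ ≤ Lb * ‖x - y‖)
    (hσ : ∀ t x y, ‖σ t x - σ t y‖ ≤ Lσ * ‖x - y‖)
    (Ω : Type*) [MeasurableSpace Ω] (P : Measure Ω) [IsProbabilityMeasure P]
    (Z : Ω → Euc q) (hZm : Measurable Z) (hZ1 : Integrable Z P)
    (hZ0 : (∫ ω, Z ω ∂P) = 0) (hZs : Integrable (fun ω => ‖Z ω‖ ^ (p + 1)) P)
    (x x' : Euc d) (k : ℕ) :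
    (∫ ω, ‖euler (T / n) b σ ((k : ℝ) * (T / n)) x (Z ω)
          - euler (T / n) b σ ((k : ℝ) * (T / n)) x' (Z ω)‖ ^ p ∂P)
        ≤ ‖x - x'‖ ^ p
          * Real.exp ((T / n) * (c₁ (p + 1) + (p + 1) * Lb
              + c₂ (p + 1) Δmax * Lσ ^ (p + 1) * ∫ ω, ‖Z ω‖ ^ (p + 1) ∂P))
      ∧ (∫ ω, ‖euler (T / n) b σ ((k : ℝ) * (T / n)) x (Z ω)
          - euler (T / n) b σ ((k : ℝ) * (T / n)) x' (Z ω)‖ ^ p ∂P) ^ (1 / p)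
        ≤ Real.exp ((T / n) * (c₁ (p + 1) + (p + 1) * Lb
              + c₂ (p + 1) Δmax * Lσ ^ (p + 1) * ∫ ω, ‖Z ω‖ ^ (p + 1) ∂P) / p)
          * ‖x - x'‖ :=
  euler_Lp_lipschitz_of_lt_two_general d q T Δmax n hT hΔ p hp1 hp2 b σ Lb Lσ hLb hLσ hb hσ Ω P Z
    hZ1 hZ0 hZs x x' k
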